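/- For 0 < ε < 1/2, let u_ε(x) = −√ε (1 − x²)^{1/2 + ε} on (−1, 1). Then u_ε is convex with u_ε(±1) = 0 and its Monge–Ampère energy satisfies E(u_ε) = ∫_{−1}^{1} (−u_ε(x)) u_ε''(x) dx ≤ (1 + 2ε)² ≤ 4. -/

import Mathlib

/-!
Since `0 < 1/2 + ε ≤ 1`, the power `t ↦ t ^ (1/2 + ε)` is concave and increasing on
`[0, ∞)`, so `(1 - x²) ^ (1/2 + ε)` is concave and `u_ε` is convex. On `(-1, 1)` one computes
`(-u_ε) u_ε'' = ε (1 + 2ε) (1 - x²) ^ (2ε - 1) (1 - 2ε x²)`, which is at most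
`ε (1 + 2ε) ((1 - x) ^ (2ε - 1) + (1 + x) ^ (2ε - 1))`:
one of the factors `1 ± x` is at least `1`, and its negative power is at most `1`. Integrating the
majorant gives `(1 + 2ε) 2 ^ (2ε)`, and Bernoulli's inequality gives `2 ^ (2ε) ≤ 1 + 2ε`.
-/

open Set intervalIntegral

lemma concaveOn_one_sub_sq : ConcaveOn ℝ univ fun x : ℝ => 1 - x ^ 2 :=
  (concaveOn_const 1 convex_univ).sub even_two.convexOn_pow

lemma concaveOn_one_sub_sq_rpow {p : ℝ} (hp₀ : 0 ≤ p) (hp₁ : p ≤ 1) :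
    ConcaveOn ℝ (Icc (-1) 1) fun x : ℝ => (1 - x ^ 2) ^ p := by
  have hmaps : (fun x : ℝ => 1 - x ^ 2) '' Icc (-1) 1 ⊆ Ici 0 := by
    rintro _ ⟨x, hx, rfl⟩
    simpa [sq_le_one_iff_abs_le_one, abs_le] using hx
  have hconv : Convex ℝ ((fun x : ℝ => 1 - x ^ 2) '' Icc (-1) 1) :=
    (isPreconnected_Icc.image _ (by fun_prop)).convex
  exact ((Real.concaveOn_rpow hp₀ hp₁).subset hmaps hconv).comp
    (concaveOn_one_sub_sq.subset (subset_univ _) (convex_Icc _ _))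
    ((Real.monotoneOn_rpow_Ici_of_exponent_nonneg hp₀).mono hmaps)

lemma one_sub_sq_pos {x : ℝ} (hx : x ∈ Ioo (-1) 1) : 0 < 1 - x ^ 2 := by
  nlinarith [hx.1, hx.2]

lemma hasDerivAt_one_sub_sq_rpow (p : ℝ) {x : ℝ} (hx : x ∈ Ioo (-1) 1) :
    HasDerivAt (fun x => (1 - x ^ 2) ^ p) (-(2 * p * x * (1 - x ^ 2) ^ (p - 1))) x := by
  have h := ((hasDerivAt_pow 2 x).const_sub 1).rpow_const (p := p)
    (Or.inl (one_sub_sq_pos hx).ne')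
  convert h using 1
  push_cast
  ring

lemma deriv_deriv_one_sub_sq_rpow (p : ℝ) {x : ℝ} (hx : x ∈ Ioo (-1) 1) :
    deriv (deriv fun x => (1 - x ^ 2) ^ p) x =
      -(2 * p * (1 - x ^ 2) ^ (p - 2) * (1 - (2 * p - 1) * x ^ 2)) := by
  have hderiv : deriv (fun x => (1 - x ^ 2) ^ p) =ᶠ[nhds x]
      fun y => -(2 * p * y * (1 - y ^ 2) ^ (p - 1)) := by
    filter_upwards [isOpen_Ioo.mem_nhds hx] with y hy
    exact (hasDerivAt_one_sub_sq_rpow p hy).deriv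
  have h : HasDerivAt (fun y => -(2 * p * y * (1 - y ^ 2) ^ (p - 1)))
      (-(2 * p * (1 - x ^ 2) ^ (p - 1) - 2 * p * x * (2 * (p - 1) * x * (1 - x ^ 2) ^ (p - 1 - 1))))
      x := by
    refine (((hasDerivAt_id' x).const_mul (2 * p)).mul
      (hasDerivAt_one_sub_sq_rpow (p - 1) hx)).neg.congr_deriv ?_
    ring
  have hpow : (1 - x ^ 2) ^ (p - 1) = (1 - x ^ 2) ^ (p - 2) * (1 - x ^ 2) := by
    rw [← Real.rpow_add_one (one_sub_sq_pos hx).ne']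
    ring_nf
  rw [hderiv.deriv_eq, h.deriv, hpow, show p - 1 - 1 = p - 2 by ring]
  ring

lemma deriv_deriv_neg_const_mul (c : ℝ) (f : ℝ → ℝ) (x : ℝ) :
    deriv (deriv fun x => -(c * f x)) x = -(c * deriv (deriv f) x) := by
  simp only [deriv.fun_neg', deriv_const_mul_field']

lemma mul_deriv_deriv_neg_const_mul_one_sub_sq_rpow (c p : ℝ) {x : ℝ} (hx : x ∈ Ioo (-1) 1) :
    c * (1 - x ^ 2) ^ p * deriv (deriv fun x => -(c * (1 - x ^ 2) ^ p)) x =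
      2 * c ^ 2 * p * (1 - x ^ 2) ^ (2 * p - 2) * (1 - (2 * p - 1) * x ^ 2) := by
  have hpow : (1 - x ^ 2) ^ p * (1 - x ^ 2) ^ (p - 2) = (1 - x ^ 2) ^ (2 * p - 2) := by
    rw [← Real.rpow_add (one_sub_sq_pos hx)]
    ring_nf
  rw [deriv_deriv_neg_const_mul, deriv_deriv_one_sub_sq_rpow _ hx]
  linear_combination 2 * c ^ 2 * p * (1 - (2 * p - 1) * x ^ 2) * hpow

lemma rpow_mul_le_rpow_add_rpow {s t a : ℝ} (hs : 0 ≤ s) (ht : 0 ≤ t)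
    (hst : 1 ≤ s ∨ 1 ≤ t) (ha : a ≤ 0) : (s * t) ^ a ≤ s ^ a + t ^ a := by
  have hsa := Real.rpow_nonneg hs a
  have hta := Real.rpow_nonneg ht a
  rw [Real.mul_rpow hs ht]
  rcases hst with h | h
  · nlinarith [Real.rpow_le_one_of_one_le_of_nonpos h ha]
  · nlinarith [Real.rpow_le_one_of_one_le_of_nonpos h ha]

lemma one_sub_sq_rpow_le {a x : ℝ} (ha : a ≤ 0) (hx : x ∈ Icc (-1) 1) :
    (1 - x ^ 2) ^ a ≤ (1 - x) ^ a + (1 + x) ^ a := by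
  rw [show 1 - x ^ 2 = (1 - x) * (1 + x) by ring]
  refine rpow_mul_le_rpow_add_rpow (by linarith [hx.2]) (by linarith [hx.1]) ?_ ha
  rcases le_total x 0 with h | h
  · left; linarith
  · right; linarith

lemma mul_deriv_deriv_neg_const_mul_one_sub_sq_rpow_le (c : ℝ) {p x : ℝ} (hp : 1 / 2 ≤ p)
    (hp₁ : p ≤ 1) (hx : x ∈ Ioo (-1) 1) :
    c * (1 - x ^ 2) ^ p * deriv (deriv fun x => -(c * (1 - x ^ 2) ^ p)) x ≤
      2 * c ^ 2 * p * ((1 - x) ^ (2 * p - 2) + (1 + x) ^ (2 * p - 2)) := by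
  rw [mul_deriv_deriv_neg_const_mul_one_sub_sq_rpow c p hx]
  have hpow := Real.rpow_nonneg (one_sub_sq_pos hx).le (2 * p - 2)
  calc 2 * c ^ 2 * p * (1 - x ^ 2) ^ (2 * p - 2) * (1 - (2 * p - 1) * x ^ 2)
      ≤ 2 * c ^ 2 * p * (1 - x ^ 2) ^ (2 * p - 2) := by
        have : 0 ≤ (2 * p - 1) * x ^ 2 := by nlinarith
        have : 0 ≤ 2 * c ^ 2 * p * (1 - x ^ 2) ^ (2 * p - 2) := by positivity
        nlinarith
    _ ≤ 2 * c ^ 2 * p * ((1 - x) ^ (2 * p - 2) + (1 + x) ^ (2 * p - 2)) := by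
        gcongr
        exact one_sub_sq_rpow_le (by linarith) (Ioo_subset_Icc_self hx)

lemma intervalIntegrable_one_sub_rpow {a : ℝ} (ha : -1 < a) :
    IntervalIntegrable (fun x => (1 - x) ^ a) MeasureTheory.volume (-1) 1 := by
  simpa [show (1:ℝ) - 2 = -1 by norm_num] using
    ((intervalIntegrable_rpow' ha (a := 0) (b := 2)).comp_sub_left 1).symm

lemma intervalIntegrable_one_add_rpow {a : ℝ} (ha : -1 < a) :
    IntervalIntegrable (fun x => (1 + x) ^ a) MeasureTheory.volume (-1) 1 := by
  simpa [show (2:ℝ) - 1 = 1 by norm_num] using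
    (intervalIntegrable_rpow' ha (a := 0) (b := 2)).comp_add_left 1

lemma integral_one_sub_rpow {a : ℝ} (ha : -1 < a) :
    ∫ x in (-1)..1, (1 - x) ^ a = 2 ^ (a + 1) / (a + 1) := by
  rw [integral_comp_sub_left (fun x => x ^ a), integral_rpow (Or.inl ha)]
  norm_num [Real.zero_rpow (by linarith : a + 1 ≠ 0)]

lemma integral_one_add_rpow {a : ℝ} (ha : -1 < a) :
    ∫ x in (-1)..1, (1 + x) ^ a = 2 ^ (a + 1) / (a + 1) := by
  rw [integral_comp_add_left (fun x => x ^ a), integral_rpow (Or.inl ha)]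
  norm_num [Real.zero_rpow (by linarith : a + 1 ≠ 0)]

theorem integral_mul_deriv_deriv_neg_const_mul_one_sub_sq_rpow_le (c : ℝ) {p : ℝ}
    (hp : 1 / 2 < p) (hp₁ : p ≤ 1) :
    ∫ x in (-1)..1, c * (1 - x ^ 2) ^ p * deriv (deriv fun x => -(c * (1 - x ^ 2) ^ p)) x ≤
      c ^ 2 * p * 2 ^ (2 * p + 1) / (2 * p - 1) := by
  have ha : -1 < 2 * p - 2 := by linarith
  have hG : IntervalIntegrable
      (fun x => 2 * c ^ 2 * p * ((1 - x) ^ (2 * p - 2) + (1 + x) ^ (2 * p - 2)))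
      MeasureTheory.volume (-1) 1 :=
    ((intervalIntegrable_one_sub_rpow ha).add (intervalIntegrable_one_add_rpow ha)).const_mul _
  by_cases hE : IntervalIntegrable
    (fun x => c * (1 - x ^ 2) ^ p * deriv (deriv fun x => -(c * (1 - x ^ 2) ^ p)) x)
    MeasureTheory.volume (-1) 1
  swap
  · -- a non-integrable function has integral `0` by convention
    rw [integral_undef hE]
    have : 0 < 2 * p - 1 := by linarith
    positivity
  refine (integral_mono_on_of_le_Ioo (by norm_num) hE hG fun x hx =>
    mul_deriv_deriv_neg_const_mul_one_sub_sq_rpow_le c hp.le hp₁ hx).trans_eq ?_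
  rw [integral_const_mul, integral_add (intervalIntegrable_one_sub_rpow ha)
    (intervalIntegrable_one_add_rpow ha), integral_one_sub_rpow ha, integral_one_add_rpow ha,
    show 2 * p - 2 + 1 = 2 * p - 1 by ring, show 2 * p + 1 = 2 * p - 1 + 2 by ring,
    Real.rpow_add two_pos]
  ring

theorem stmt_9 (ε : ℝ) (hε : ε ∈ Ioo (0:ℝ) (1/2)) (u : ℝ → ℝ)
    (hu : u = fun x : ℝ => -(Real.sqrt ε * (1 - x ^ 2) ^ ((1:ℝ)/2 + ε))) :
    ConvexOn ℝ (Icc (-1) 1) u ∧ u 1 = 0 ∧ u (-1) = 0 ∧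
    (∫ x in (-1:ℝ)..1, (-u x) * deriv (deriv u) x) ≤ (1 + 2 * ε) ^ 2 ∧
    (1 + 2 * ε) ^ 2 ≤ 4 := by
  obtain ⟨hε₀, hε₁⟩ := hε
  have hp : (0:ℝ) < 1 / 2 + ε := by linarith
  subst hu
  refine ⟨((concaveOn_one_sub_sq_rpow hp.le (by linarith)).smul (Real.sqrt_nonneg ε)).neg,
    by norm_num [Real.zero_rpow hp.ne'], by norm_num [Real.zero_rpow hp.ne'], ?_, by nlinarith⟩
  have hbernoulli : (2:ℝ) ^ (2 * ε) ≤ 1 + 2 * ε := by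
    simpa [one_add_one_eq_two] using
      rpow_one_add_le_one_add_mul_self (s := 1) (by norm_num) (p := 2 * ε) (by linarith)
        (by linarith)
  simp only [neg_neg]
  calc _ ≤ √ε ^ 2 * (1 / 2 + ε) * 2 ^ (2 * (1 / 2 + ε) + 1) / (2 * (1 / 2 + ε) - 1) :=
        integral_mul_deriv_deriv_neg_const_mul_one_sub_sq_rpow_le _ (by linarith) (by linarith)
    _ = (1 + 2 * ε) * 2 ^ (2 * ε) := by
        rw [Real.sq_sqrt hε₀.le, show 2 * (1 / 2 + ε) + 1 = 2 * ε + 2 by ring,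
          Real.rpow_add two_pos, Real.rpow_two]
        field_simp
        ring
    _ ≤ (1 + 2 * ε) ^ 2 := by nlinarith
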